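/- arXiv:2108.06982 — 5 statements merged into one kernel-verified Lean document; each statement's English description precedes it below -/
import Mathlib

section
/- Let q > 1 and let f : ℝ → ℝ be continuous with F(t) = ∫₀ᵗ f(τ) dτ. Suppose the map t ↦ f(t)/t^{2q-1} is strictly increasing on (0, ∞). Then the map t ↦ (1/(2q)) f(t) t − F(t) is strictly increasing on [0, ∞). -/
/-!
Put `r = 2q - 1`. For `0 ≤ a < b`, the monotonicity of `f x / x ^ r` gives
`f x ≤ (f b / b ^ r) x ^ r` on `(a, b]`, strictly inside, so
`∫_a^b f < (f b / b ^ r) (b ^ (r + 1) - a ^ (r + 1)) / (r + 1)`. Monotonicity once more turns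
`(f b / b ^ r) a ^ (r + 1)` into an upper bound for `f a * a`, hence
`F b - F a < (f b * b - f a * a) / (2q)`.
-/

open Set intervalIntegral

section DivRpowStrictMono

variable {f : ℝ → ℝ} {r : ℝ}

lemma apply_le_div_rpow_mul_rpow
    (hmono : ∀ s t : ℝ, 0 < s → s < t → f s / s ^ r < f t / t ^ r)
    {x b : ℝ} (hx : 0 < x) (hxb : x ≤ b) : f x ≤ f b / b ^ r * x ^ r := by
  rcases hxb.eq_or_lt with rfl | hxb
  · rw [div_mul_cancel₀ _ (Real.rpow_pos_of_pos hx r).ne']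
  · exact ((div_lt_iff₀ (Real.rpow_pos_of_pos hx r)).1 (hmono x b hx hxb)).le

lemma apply_mul_self_le_div_rpow_mul_rpow_add_one (hr : 0 ≤ r)
    (hmono : ∀ s t : ℝ, 0 < s → s < t → f s / s ^ r < f t / t ^ r)
    {a b : ℝ} (ha : 0 ≤ a) (hab : a ≤ b) : f a * a ≤ f b / b ^ r * a ^ (r + 1) := by
  rw [Real.rpow_add_one' ha (by linarith), ← mul_assoc]
  rcases ha.eq_or_lt with rfl | ha
  · simp
  · exact mul_le_mul_of_nonneg_right (apply_le_div_rpow_mul_rpow hmono ha hab) ha.le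

lemma integral_lt_of_div_rpow_strictMono (hr : 0 ≤ r) (hf : Continuous f)
    (hmono : ∀ s t : ℝ, 0 < s → s < t → f s / s ^ r < f t / t ^ r)
    {a b : ℝ} (ha : 0 ≤ a) (hab : a < b) :
    ∫ x in a..b, f x < (f b * b - f a * a) / (r + 1) := by
  have hb : 0 < b := ha.trans_lt hab
  have hmid : (a + b) / 2 ∈ Ioo a b := ⟨by linarith, by linarith⟩
  have hb_eq : f b / b ^ r * b ^ (r + 1) = f b * b := by
    rw [Real.rpow_add_one hb.ne', ← mul_assoc,
      div_mul_cancel₀ _ (Real.rpow_pos_of_pos hb r).ne']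
  have ha_le := apply_mul_self_le_div_rpow_mul_rpow_add_one hr hmono ha hab.le
  calc ∫ x in a..b, f x < ∫ x in a..b, f b / b ^ r * x ^ r := by
        refine integral_lt_integral_of_continuousOn_of_le_of_exists_lt hab hf.continuousOn
          (continuous_const.mul (Real.continuous_rpow_const hr)).continuousOn
          (fun x hx ↦ apply_le_div_rpow_mul_rpow hmono (ha.trans_lt hx.1) hx.2)
          ⟨(a + b) / 2, Ioo_subset_Icc_self hmid, ?_⟩
        have hpos : 0 < (a + b) / 2 := ha.trans_lt hmid.1
        exact (div_lt_iff₀ (Real.rpow_pos_of_pos hpos r)).1 (hmono _ b hpos hmid.2)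
    _ = (f b / b ^ r * b ^ (r + 1) - f b / b ^ r * a ^ (r + 1)) / (r + 1) := by
        rw [integral_const_mul, integral_rpow (Or.inl (by linarith))]
        ring
    _ ≤ (f b * b - f a * a) / (r + 1) := by
        exact div_le_div_of_nonneg_right (by linarith) (by linarith)

end DivRpowStrictMono

theorem stmt0 (q : ℝ) (hq : 1 < q) (f : ℝ → ℝ) (hf : Continuous f)
    (F : ℝ → ℝ) (hF : ∀ t, F t = ∫ τ in (0:ℝ)..t, f τ)
    (hmono : ∀ s t : ℝ, 0 < s → s < t →
      f s / s ^ (2 * q - 1) < f t / t ^ (2 * q - 1)) :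
    StrictMonoOn (fun t => (1 / (2 * q)) * f t * t - F t) (Set.Ici (0:ℝ)) := by
  intro a ha b _ hab
  have hFab : F b - F a = ∫ x in a..b, f x := by
    rw [hF, hF]
    exact integral_interval_sub_left (hf.intervalIntegrable 0 b) (hf.intervalIntegrable 0 a)
  have hFlt := integral_lt_of_div_rpow_strictMono (by linarith) hf hmono (mem_Ici.1 ha) hab
  rw [sub_add_cancel, ← hFab] at hFlt
  have hsplit : (f b * b - f a * a) / (2 * q)
      = 1 / (2 * q) * f b * b - 1 / (2 * q) * f a * a := by ring
  simp only
  linarith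
end

section
/- Let q > 1 and let f : ℝ → ℝ be continuous with F(t) = ∫₀ᵗ f(τ) dτ. Suppose the map t ↦ f(t)/|t|^{2q-1} is strictly increasing on (−∞, 0) (equivalently f(t)/(t|t|^{2q-2}) is strictly increasing for t < 0). Then the map t ↦ (1/(2q)) f(t) t − F(t) is strictly decreasing on (−∞, 0]. -/
/-!
Put `p = 2q - 1` and, for `s < t ≤ 0`, `c = f(s)/|s|^p`. Monotonicity gives `f(τ) > c|τ|^p` on
`(s, t)` and `f(t) t ≤ -c|t|^(p+1)`, while `f(s) s = -c|s|^(p+1)`. Integrating the comparison,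
`F(t) - F(s) > c (|s|^(p+1) - |t|^(p+1)) / (p+1) ≥ (f(t) t - f(s) s) / (p+1)`.
-/

open Set intervalIntegral

section

variable {p : ℝ}

lemma integral_abs_rpow_of_nonpos (hp : -1 < p) {s t : ℝ} (hs : s ≤ 0) (ht : t ≤ 0) :
    ∫ x in s..t, |x| ^ p = (|s| ^ (p + 1) - |t| ^ (p + 1)) / (p + 1) := by
  have hcongr : EqOn (fun x : ℝ => |x| ^ p) (fun x => x ^ p) (uIcc (-t) (-s)) := by
    intro x hx
    have hx : 0 ≤ x := le_trans (le_min (neg_nonneg.2 ht) (neg_nonneg.2 hs)) hx.1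
    simp only [abs_of_nonneg hx]
  calc ∫ x in s..t, |x| ^ p = ∫ x in s..t, |-x| ^ p := by simp only [abs_neg]
    _ = ∫ x in -t..-s, x ^ p := by
      rw [integral_comp_neg (fun x => |x| ^ p), integral_congr hcongr]
    _ = (|s| ^ (p + 1) - |t| ^ (p + 1)) / (p + 1) := by
      rw [integral_rpow (Or.inl hp), abs_of_nonpos hs, abs_of_nonpos ht]

lemma mul_eq_neg_div_abs_rpow_mul {x : ℝ} (hx : x < 0) (y : ℝ) :
    y * x = -(y / |x| ^ p * |x| ^ (p + 1)) := by
  have hpos : 0 < |x| ^ p := Real.rpow_pos_of_pos (abs_pos.2 hx.ne) p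
  rw [Real.rpow_add_one (abs_ne_zero.2 hx.ne), ← mul_assoc, div_mul_cancel₀ _ hpos.ne',
    abs_of_neg hx]
  ring

lemma lt_integral_of_mul_abs_rpow_lt (hp : 0 ≤ p) {f : ℝ → ℝ} (hf : Continuous f)
    {c s t : ℝ} (hst : s < t) (ht : t ≤ 0) (hlt : ∀ x ∈ Ioo s t, c * |x| ^ p < f x) :
    c * (|s| ^ (p + 1) - |t| ^ (p + 1)) / (p + 1) < ∫ x in s..t, f x := by
  have hcont : Continuous fun x : ℝ => c * |x| ^ p :=
    continuous_const.mul (continuous_abs.rpow_const fun _ => Or.inr hp)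
  have hpos : 0 < ∫ x in s..t, (f x - c * |x| ^ p) :=
    intervalIntegral_pos_of_pos_on ((hf.sub hcont).intervalIntegrable s t)
      (fun x hx => sub_pos.2 (hlt x hx)) hst
  rw [integral_sub (hf.intervalIntegrable s t) (hcont.intervalIntegrable s t),
    integral_const_mul, integral_abs_rpow_of_nonpos (by linarith) (hst.le.trans ht) ht] at hpos
  rw [mul_div_assoc]
  linarith

theorem strictAntiOn_mul_self_div_sub_integral (hp : 0 ≤ p) {f : ℝ → ℝ} (hf : Continuous f)
    (hmono : ∀ s t : ℝ, s < t → t < 0 → f s / |s| ^ p < f t / |t| ^ p) :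
    StrictAntiOn (fun t => f t * t / (p + 1) - ∫ τ in (0:ℝ)..t, f τ) (Iic 0) := by
  intro s _ t (ht : t ≤ 0) hst
  have hs : s < 0 := hst.trans_le ht
  have hp1 : 0 < p + 1 := by linarith
  set c := f s / |s| ^ p
  have hfs : f s * s = -(c * |s| ^ (p + 1)) := mul_eq_neg_div_abs_rpow_mul hs (f s)
  have hft : f t * t ≤ -(c * |t| ^ (p + 1)) := by
    rcases ht.lt_or_eq with ht | rfl
    · rw [mul_eq_neg_div_abs_rpow_mul ht (f t), neg_le_neg_iff]
      exact mul_le_mul_of_nonneg_right (hmono s t hst ht).le (by positivity)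
    · simp [Real.zero_rpow hp1.ne']
  have hint : c * (|s| ^ (p + 1) - |t| ^ (p + 1)) / (p + 1) < ∫ τ in s..t, f τ :=
    lt_integral_of_mul_abs_rpow_lt hp hf hst ht fun x hx =>
      (lt_div_iff₀ (Real.rpow_pos_of_pos (abs_pos.2 (hx.2.trans_le ht).ne) p)).1
        (hmono s x hx.1 (hx.2.trans_le ht))
  have hF : (∫ τ in (0:ℝ)..t, f τ) - ∫ τ in (0:ℝ)..s, f τ = ∫ τ in s..t, f τ :=
    integral_interval_sub_left (hf.intervalIntegrable 0 t) (hf.intervalIntegrable 0 s)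
  have hdiff : (f t * t - f s * s) / (p + 1) < ∫ τ in s..t, f τ := by
    calc (f t * t - f s * s) / (p + 1) ≤ c * (|s| ^ (p + 1) - |t| ^ (p + 1)) / (p + 1) := by
          gcongr
          linarith
      _ < ∫ τ in s..t, f τ := hint
  rw [sub_div] at hdiff
  linarith

end

theorem stmt1 (q : ℝ) (hq : 1 < q) (f : ℝ → ℝ) (hf : Continuous f)
    (F : ℝ → ℝ) (hF : ∀ t, F t = ∫ τ in (0:ℝ)..t, f τ)
    (hmono : ∀ s t : ℝ, s < t → t < 0 →
      f s / |s| ^ (2 * q - 1) < f t / |t| ^ (2 * q - 1)) :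
    StrictAntiOn (fun t => (1 / (2 * q)) * f t * t - F t) (Set.Iic (0:ℝ)) := by
  have h := strictAntiOn_mul_self_div_sub_integral (by linarith) hf hmono
  have hexp : 2 * q - 1 + 1 = 2 * q := by ring
  convert h using 2 with t
  rw [hF, hexp]
  ring
end

section
/- Let q > 1 and let f : ℝ → ℝ be continuous with f(t) > 0 for t > 0 and t ↦ f(t)/t^{2q-1} strictly increasing on (0, ∞). Then for 0 < t₂ < t₁: (1/(2q)) f(t₁) t₁ − F(t₁) > (1/(2q)) (f(t₁)/t₁^{2q-1}) t₂^{2q} − F(t₂), where F(t) = ∫₀ᵗ f(τ) dτ. -/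
open Set intervalIntegral

/-- The hypothesis says `f x ≤ c x ^ (p - 1)` on `[a, b]` with `c = f b / b ^ (p - 1)`, strictly
at `a`; integrate. -/
theorem integral_lt_of_div_rpow_sub_one_lt {f : ℝ → ℝ} {a b p : ℝ} (ha : 0 < a) (hab : a < b)
    (hp : 0 < p) (hf : ContinuousOn f (Icc a b))
    (hlt : ∀ x ∈ Ico a b, f x / x ^ (p - 1) < f b / b ^ (p - 1)) :
    ∫ x in a..b, f x < f b / b ^ (p - 1) * ((b ^ p - a ^ p) / p) := by
  set c := f b / b ^ (p - 1)
  have hpow_pos : ∀ x ∈ Icc a b, 0 < x ^ (p - 1) := fun x hx ↦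
    Real.rpow_pos_of_pos (ha.trans_le hx.1) _
  have hle : ∀ x ∈ Ioc a b, f x ≤ c * x ^ (p - 1) := by
    intro x hx
    rw [← div_le_iff₀ (hpow_pos x (Ioc_subset_Icc_self hx))]
    rcases hx.2.lt_or_eq with hxb | rfl
    · exact (hlt x ⟨hx.1.le, hxb⟩).le
    · exact le_rfl
  have hlt_a : f a < c * a ^ (p - 1) :=
    (div_lt_iff₀ (hpow_pos a (left_mem_Icc.2 hab.le))).1 (hlt a (left_mem_Ico.2 hab))
  have hcont : ContinuousOn (fun x ↦ c * x ^ (p - 1)) (Icc a b) := fun x hx ↦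
    (continuousAt_const.mul
      (Real.continuousAt_rpow_const x _ (Or.inl (ha.trans_le hx.1).ne'))).continuousWithinAt
  calc ∫ x in a..b, f x < ∫ x in a..b, c * x ^ (p - 1) :=
        integral_lt_integral_of_continuousOn_of_le_of_exists_lt hab hf hcont hle
          ⟨a, left_mem_Icc.2 hab.le, hlt_a⟩
    _ = c * ((b ^ p - a ^ p) / p) := by
        rw [integral_const_mul, integral_rpow (Or.inl (by linarith)), sub_add_cancel]

theorem stmt3_general (q : ℝ) (hq : 1 < q) (f : ℝ → ℝ) (hf : Continuous f)
    (hmono : ∀ s t : ℝ, 0 < s → s < t →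
      f s / s ^ (2 * q - 1) < f t / t ^ (2 * q - 1))
    (F : ℝ → ℝ) (hF : ∀ t, F t = ∫ τ in (0:ℝ)..t, f τ)
    (t₁ t₂ : ℝ) (ht₂ : 0 < t₂) (ht : t₂ < t₁) :
    (1 / (2 * q)) * f t₁ * t₁ - F t₁ >
      (1 / (2 * q)) * (f t₁ / t₁ ^ (2 * q - 1)) * t₂ ^ (2 * q) - F t₂ := by
  have ht₁ : 0 < t₁ := ht₂.trans ht
  have hint := integral_lt_of_div_rpow_sub_one_lt ht₂ ht (by linarith) hf.continuousOn
    fun x hx ↦ hmono x t₁ (ht₂.trans_le hx.1) hx.2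
  have hsplit : F t₁ - F t₂ = ∫ τ in t₂..t₁, f τ := by
    rw [hF, hF, integral_interval_sub_left (hf.intervalIntegrable _ _) (hf.intervalIntegrable _ _)]
  have hpow : f t₁ * t₁ = f t₁ / t₁ ^ (2 * q - 1) * t₁ ^ (2 * q) := by
    have : t₁ ^ (2 * q) ≠ 0 := (Real.rpow_pos_of_pos ht₁ _).ne'
    rw [Real.rpow_sub_one ht₁.ne']
    field_simp
  set c := f t₁ / t₁ ^ (2 * q - 1)
  have hexpand : c * ((t₁ ^ (2 * q) - t₂ ^ (2 * q)) / (2 * q))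
      = 1 / (2 * q) * (c * t₁ ^ (2 * q)) - 1 / (2 * q) * c * t₂ ^ (2 * q) := by
    ring
  rw [mul_assoc, hpow]
  linarith

theorem stmt3 (q : ℝ) (hq : 1 < q) (f : ℝ → ℝ) (hf : Continuous f)
    (hpos : ∀ t : ℝ, 0 < t → 0 < f t)
    (hmono : ∀ s t : ℝ, 0 < s → s < t →
      f s / s ^ (2 * q - 1) < f t / t ^ (2 * q - 1))
    (F : ℝ → ℝ) (hF : ∀ t, F t = ∫ τ in (0:ℝ)..t, f τ)
    (t₁ t₂ : ℝ) (ht₂ : 0 < t₂) (ht : t₂ < t₁) :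
    (1 / (2 * q)) * f t₁ * t₁ - F t₁ >
      (1 / (2 * q)) * (f t₁ / t₁ ^ (2 * q - 1)) * t₂ ^ (2 * q) - F t₂ :=
  stmt3_general q hq f hf hmono F hF t₁ t₂ ht₂ ht
end

section
/- Let q > 1 and f : ℝ → ℝ be continuous, odd on ℝ, with t ↦ f(t)/t^{2q-1} strictly increasing on (0, ∞). Then for every t ≠ 0, (1/(2q)) f(t) t − F(t) > 0, where F(t) = ∫₀ᵗ f(τ) dτ. -/
/-! Fix `t > 0` and put `c = f t / t ^ (2q - 1)`. Strict monotonicity of `f s / s ^ (2q - 1)` gives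
`f ≤ c s ^ (2q - 1)` on `[0, t]`, strictly on `(0, t)`, so `∫₀ᵗ f < c t ^ (2q) / (2q) = f t * t / (2q)`.
For `t < 0` use that `F` is even because `f` is odd, so the expression is even in `t`. -/

open intervalIntegral

lemma Function.Odd.intervalIntegral_zero_neg {E : Type*} [NormedAddCommGroup E] [NormedSpace ℝ E]
    {f : ℝ → E} (hf : f.Odd) (t : ℝ) :
    ∫ τ in (0 : ℝ)..-t, f τ = ∫ τ in (0 : ℝ)..t, f τ := by
  calc ∫ τ in (0 : ℝ)..-t, f τ = -∫ τ in (0 : ℝ)..t, f (-τ) := by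
        rw [integral_comp_neg, neg_zero, integral_symm]
    _ = ∫ τ in (0 : ℝ)..t, f τ := by simp only [hf.eq, integral_neg, neg_neg]

lemma integral_const_mul_rpow_zero {p : ℝ} (hp : 0 ≤ p) {t : ℝ} (ht : 0 < t) (c : ℝ) :
    ∫ τ in (0 : ℝ)..t, c * τ ^ p = c * t ^ p * t / (p + 1) := by
  rw [integral_const_mul, integral_rpow (Or.inl (by linarith)),
    Real.zero_rpow (by linarith), Real.rpow_add_one ht.ne']
  ring

lemma integral_lt_mul_self_div_of_div_rpow_lt {f : ℝ → ℝ} {p t : ℝ} (hp : 0 ≤ p) (ht : 0 < t)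
    (hf : ContinuousOn f (Set.Icc 0 t))
    (hmono : ∀ s, 0 < s → s < t → f s / s ^ p < f t / t ^ p) :
    ∫ τ in (0 : ℝ)..t, f τ < f t * t / (p + 1) := by
  set c := f t / t ^ p
  have hft : f t = c * t ^ p := (div_mul_cancel₀ _ (Real.rpow_pos_of_pos ht p).ne').symm
  have hlt : ∀ s, 0 < s → s < t → f s < c * s ^ p := fun s hs hst ↦ by
    have hsp := Real.rpow_pos_of_pos hs p
    simpa [div_mul_cancel₀ _ hsp.ne'] using mul_lt_mul_of_pos_right (hmono s hs hst) hsp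
  have hcont : ContinuousOn (fun τ ↦ c * τ ^ p) (Set.Icc 0 t) :=
    (continuous_const.mul (Real.continuous_rpow_const hp)).continuousOn
  calc ∫ τ in (0 : ℝ)..t, f τ < ∫ τ in (0 : ℝ)..t, c * τ ^ p := by
        refine integral_lt_integral_of_continuousOn_of_le_of_exists_lt ht hf hcont ?_
          ⟨t / 2, ⟨by linarith, by linarith⟩, hlt _ (by linarith) (by linarith)⟩
        rintro s ⟨hs, hst⟩
        rcases hst.eq_or_lt with rfl | hst
        · exact hft.le
        · exact (hlt s hs hst).le
    _ = f t * t / (p + 1) := by rw [integral_const_mul_rpow_zero hp ht, hft]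

theorem stmt8 (q : ℝ) (hq : 1 < q) (f : ℝ → ℝ) (hf : Continuous f)
    (hodd : ∀ t : ℝ, f (-t) = -f t)
    (hmono : ∀ s t : ℝ, 0 < s → s < t →
      f s / s ^ (2 * q - 1) < f t / t ^ (2 * q - 1))
    (F : ℝ → ℝ) (hF : ∀ t, F t = ∫ τ in (0:ℝ)..t, f τ) :
    ∀ t : ℝ, t ≠ 0 → 0 < (1 / (2 * q)) * f t * t - F t := by
  have hpos : ∀ t, 0 < t → 0 < (1 / (2 * q)) * f t * t - F t := fun t ht ↦ by
    have hint := integral_lt_mul_self_div_of_div_rpow_lt (p := 2 * q - 1) (by linarith) ht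
      hf.continuousOn (fun s ↦ hmono s t)
    rw [sub_add_cancel] at hint
    rw [hF, one_div_mul_eq_div, div_mul_eq_mul_div]
    linarith
  intro t ht
  rcases ht.lt_or_gt with ht | ht
  · have hneg := hpos (-t) (neg_pos.mpr ht)
    rw [hodd, hF, Function.Odd.intervalIntegral_zero_neg hodd, ← hF] at hneg
    simpa only [mul_neg, neg_mul, neg_neg] using hneg
  · exact hpos t ht
end

section
/- Let q ∈ (1, 3) and q* = 3q/(3−q), K ∈ L^∞(ℝ³) ∩ L^{q*/(q*−m)}(ℝ³-balls) with K > 0, V : ℝ³ → (0,∞) continuous, and m ∈ (q, q*). Assume K(x)/V(x)^{(q*−m)/(q*−p)} → 0 as |x| → ∞ for some p < q. Then for every ε > 0 there exists R > 0 such that for all u: ∫_{|x|>R} K(x)|u(x)|^m dx ≤ ε ∫_{|x|>R} (V(x)|u(x)|^p + |u(x)|^{q*}) dx. -/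
open MeasureTheory Filter Topology Set

/-!
With `α = (qs - m) / (qs - p) ∈ [0, 1]` the exponent `m = α p + (1 - α) qs` interpolates between
`p` and `qs`, so weighted AM-GM gives `V ^ α |u| ^ m ≤ V |u| ^ p + |u| ^ qs` pointwise. The decay
hypothesis says `K ≤ ε V ^ α` outside a large ball, and integrating gives the estimate.
-/

theorem exists_forall_norm_gt_of_eventually_cocompact {E : Type*} [SeminormedAddGroup E]
    {P : E → Prop} (h : ∀ᶠ x in cocompact E, P x) : ∃ R > 0, ∀ x, R < ‖x‖ → P x :=
  ((atTop_basis_Ioi' 0).cobounded_of_norm.eventually_iff).1 (Metric.cobounded_le_cocompact h)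

theorem rpow_mul_rpow_le_mul_rpow_add_rpow {α p r m a t : ℝ} (hα₀ : 0 ≤ α) (hα₁ : α ≤ 1)
    (hm : α * p + (1 - α) * r = m) (hm₀ : m ≠ 0) (ha : 0 ≤ a) (ht : 0 ≤ t) :
    a ^ α * t ^ m ≤ a * t ^ p + t ^ r := by
  rcases ht.eq_or_lt with rfl | ht
  · rw [Real.zero_rpow hm₀, mul_zero]
    positivity
  have htm : t ^ m = (t ^ p) ^ α * (t ^ r) ^ (1 - α) := by
    rw [← hm, Real.rpow_add ht, ← Real.rpow_mul ht.le, ← Real.rpow_mul ht.le, mul_comm p,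
      mul_comm r]
  have hap : 0 ≤ a * t ^ p := by positivity
  have htr : 0 ≤ t ^ r := by positivity
  calc a ^ α * t ^ m = (a * t ^ p) ^ α * (t ^ r) ^ (1 - α) := by
        rw [htm, Real.mul_rpow ha (by positivity), mul_assoc]
    _ ≤ α * (a * t ^ p) + (1 - α) * t ^ r :=
        Real.geom_mean_le_arith_mean2_weighted hα₀ (by linarith) hap htr (by ring)
    _ ≤ a * t ^ p + t ^ r := by nlinarith

theorem setLIntegral_ofReal_le_ofReal_mul {α : Type*} [MeasurableSpace α] {μ : Measure α}
    {s : Set α} {f g : α → ℝ} {c : ℝ} (hs : MeasurableSet s) (hc : 0 ≤ c)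
    (hfg : ∀ x ∈ s, f x ≤ c * g x) :
    ∫⁻ x in s, ENNReal.ofReal (f x) ∂μ ≤ ENNReal.ofReal c * ∫⁻ x in s, ENNReal.ofReal (g x) ∂μ := by
  rw [← lintegral_const_mul' _ _ ENNReal.ofReal_ne_top]
  refine setLIntegral_mono' hs fun x hx => ?_
  rw [← ENNReal.ofReal_mul hc]
  exact ENNReal.ofReal_le_ofReal (hfg x hx)

theorem stmt19_general (p q qs m : ℝ) (hq : q ∈ Ioo (1:ℝ) 3)
    (hpq : p < q) (hm : m ∈ Ioo q qs)
    (K V : EuclideanSpace ℝ (Fin 3) → ℝ)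
    (hVpos : ∀ x, 0 < V x)
    (hdecay : Tendsto (fun x => K x / V x ^ ((qs - m) / (qs - p)))
      (cocompact (EuclideanSpace ℝ (Fin 3))) (𝓝 0)) :
    ∀ ε > (0:ℝ), ∃ R > (0:ℝ), ∀ u : EuclideanSpace ℝ (Fin 3) → ℝ,
      ∫⁻ x in {x | R < ‖x‖}, ENNReal.ofReal (K x * |u x| ^ m)
        ≤ ENNReal.ofReal ε *
          ∫⁻ x in {x | R < ‖x‖}, ENNReal.ofReal (V x * |u x| ^ p + |u x| ^ qs) := by
  intro ε hε
  set α := (qs - m) / (qs - p)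
  have hps : 0 < qs - p := by linarith [hm.1, hm.2]
  have hα₀ : 0 ≤ α := div_nonneg (by linarith [hm.2]) hps.le
  have hα₁ : α ≤ 1 := (div_le_one hps).2 (by linarith [hm.1])
  have hmα : α * p + (1 - α) * qs = m := by
    simp only [α]; field_simp; ring
  have hm₀ : m ≠ 0 := by linarith [hq.1, hm.1]
  obtain ⟨R, hR, hK⟩ :=
    exists_forall_norm_gt_of_eventually_cocompact (hdecay.eventually_lt_const hε)
  refine ⟨R, hR, fun u => setLIntegral_ofReal_le_ofReal_mul
    (measurableSet_lt measurable_const measurable_norm) hε.le fun x hx => ?_⟩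
  have hKV : K x ≤ ε * V x ^ α :=
    ((div_lt_iff₀ (Real.rpow_pos_of_pos (hVpos x) α)).1 (hK x hx)).le
  calc K x * |u x| ^ m ≤ ε * (V x ^ α * |u x| ^ m) := by
        rw [← mul_assoc]; gcongr
    _ ≤ ε * (V x * |u x| ^ p + |u x| ^ qs) := by
        gcongr
        exact rpow_mul_rpow_le_mul_rpow_add_rpow hα₀ hα₁ hmα hm₀ (hVpos x).le (abs_nonneg _)

theorem stmt19 (p q qs m : ℝ) (hq : q ∈ Ioo (1:ℝ) 3) (hqs : qs = 3 * q / (3 - q))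
    (hpq : p < q) (hm : m ∈ Ioo q qs)
    (K V : EuclideanSpace ℝ (Fin 3) → ℝ)
    (hKpos : ∀ x, 0 < K x) (hKmeas : Measurable K)
    (hKbdd : ∃ M : ℝ, ∀ x, K x ≤ M)
    (hKloc : ∀ r : ℝ, 0 < r →
      IntegrableOn (fun x => K x ^ (qs / (qs - m))) (Metric.ball (0 : EuclideanSpace ℝ (Fin 3)) r))
    (hVpos : ∀ x, 0 < V x) (hVcont : Continuous V)
    (hdecay : Tendsto (fun x => K x / V x ^ ((qs - m) / (qs - p)))
      (cocompact (EuclideanSpace ℝ (Fin 3))) (𝓝 0)) :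
    ∀ ε > (0:ℝ), ∃ R > (0:ℝ), ∀ u : EuclideanSpace ℝ (Fin 3) → ℝ,
      ∫⁻ x in {x | R < ‖x‖}, ENNReal.ofReal (K x * |u x| ^ m)
        ≤ ENNReal.ofReal ε *
          ∫⁻ x in {x | R < ‖x‖}, ENNReal.ofReal (V x * |u x| ^ p + |u x| ^ qs) :=
  stmt19_general p q qs m hq hpq hm K V hVpos hdecay
end
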